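/- Consider any play of the Lion-Man game with speed D > 0. If D_n > D for all n ∈ ℕ, then the sequence (D_n) is nonincreasing. Moreover, the lion wins the play if and only if exactly one of the following holds: (1) there exists n₀ ∈ ℕ with D_{n₀} ≤ D, in which case L_{n+1} = M_n for all n ≥ n₀; or (2) D_n > D for all n ∈ ℕ and lim_{n→∞} D_n = D. Consequently, the man wins if and only if D_n > D for all n ∈ ℕ and lim_{n→∞} D_n > D. -/
import Mathlib


open Set Filter Metric

section Defs

variable {X : Type*} [MetricSpace X]

/-- A unit-speed geodesic defined on `[a, b]`. -/
def IsGeodesicOn (γ : ℝ → X) (a b : ℝ) : Prop :=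
  ∀ s ∈ Set.Icc a b, ∀ t ∈ Set.Icc a b, dist (γ s) (γ t) = |s - t|

/-- `S` is a geodesic segment joining `x` and `y`. -/
def IsGeodesicSegment (S : Set X) (x y : X) : Prop :=
  ∃ (a b : ℝ) (γ : ℝ → X), a ≤ b ∧ IsGeodesicOn γ a b ∧ γ a = x ∧ γ b = y ∧
    S = γ '' Set.Icc a b

/-- A geodesic space: every two points are joined by a geodesic segment. -/
def GeodesicSpace (X : Type*) [MetricSpace X] : Prop :=
  ∀ x y : X, ∃ S : Set X, IsGeodesicSegment S x y

/-- A uniquely geodesic space. -/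
def UniquelyGeodesic (X : Type*) [MetricSpace X] : Prop :=
  ∀ x y : X, ∃! S : Set X, IsGeodesicSegment S x y

/-- `S` is contained in the closed `M`-neighborhood of `T`. -/
def InClosedNbhd (S T : Set X) (M : ℝ) : Prop :=
  ∀ p ∈ S, ∃ q ∈ T, dist p q ≤ M

/-- A triangle with sides `S1, S2, S3` is `M`-slim. -/
def SlimTriangle (S1 S2 S3 : Set X) (M : ℝ) : Prop :=
  InClosedNbhd S1 (S2 ∪ S3) M ∧ InClosedNbhd S2 (S1 ∪ S3) M ∧ InClosedNbhd S3 (S1 ∪ S2) M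

/-- `X` is `δ`-hyperbolic: every geodesic triangle is `δ`-slim. -/
def DeltaHyperbolic (X : Type*) [MetricSpace X] (δ : ℝ) : Prop :=
  ∀ x y z : X, ∀ S1 S2 S3 : Set X,
    IsGeodesicSegment S1 x y → IsGeodesicSegment S2 y z → IsGeodesicSegment S3 z x →
    SlimTriangle S1 S2 S3 δ

/-- A geodesic ray `γ : [0, ∞) → X`. -/
def IsGeodesicRay (γ : ℝ → X) : Prop :=
  ∀ s ∈ Set.Ici (0:ℝ), ∀ t ∈ Set.Ici (0:ℝ), dist (γ s) (γ t) = |s - t|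

/-- A set is geodesically bounded if it contains no geodesic ray. -/
def GeodesicallyBounded (A : Set X) : Prop :=
  ¬ ∃ γ : ℝ → X, IsGeodesicRay γ ∧ ∀ t ∈ Set.Ici (0:ℝ), γ t ∈ A

/-- A directional curve `γ : [0, ∞) → X` (with some constant `b ≥ 0`). -/
def IsDirectionalCurve (γ : ℝ → X) : Prop :=
  ∃ b : ℝ, 0 ≤ b ∧ ∀ s ∈ Set.Ici (0:ℝ), ∀ t ∈ Set.Ici (0:ℝ),
    |s - t| - b ≤ dist (γ s) (γ t) ∧ dist (γ s) (γ t) ≤ |s - t|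

/-- A set is directionally bounded if it contains no directional curve. -/
def DirectionallyBounded (A : Set X) : Prop :=
  ¬ ∃ γ : ℝ → X, IsDirectionalCurve γ ∧ ∀ t ∈ Set.Ici (0:ℝ), γ t ∈ A

/-- A subset of a geodesic space is convex if every geodesic segment joining two of its
points is contained in it. -/
def GeodesicConvex (A : Set X) : Prop :=
  ∀ x ∈ A, ∀ y ∈ A, ∀ S : Set X, IsGeodesicSegment S x y → S ⊆ A

/-- The comparison point in the Euclidean plane: the point on the segment from `x'` to `y'`
(of length `L`) at distance `t` from `x'`. -/
noncomputable def cmpPt (x' y' : EuclideanSpace ℝ (Fin 2)) (L t : ℝ) :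
    EuclideanSpace ℝ (Fin 2) :=
  AffineMap.lineMap x' y' (t / L)

/-- `X` is a CAT(0) space: it is geodesic and for every geodesic triangle and every
comparison triangle in the Euclidean plane, distances between points on the triangle are
bounded by the distances between the corresponding comparison points. -/
def CAT0Space (X : Type*) [MetricSpace X] : Prop :=
  GeodesicSpace X ∧
  ∀ (x y z : X) (γ1 γ2 γ3 : ℝ → X),
    IsGeodesicOn γ1 0 (dist x y) → γ1 0 = x → γ1 (dist x y) = y →
    IsGeodesicOn γ2 0 (dist y z) → γ2 0 = y → γ2 (dist y z) = z →
    IsGeodesicOn γ3 0 (dist z x) → γ3 0 = z → γ3 (dist z x) = x →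
    ∀ x' y' z' : EuclideanSpace ℝ (Fin 2),
      dist x' y' = dist x y → dist y' z' = dist y z → dist z' x' = dist z x →
      (∀ s ∈ Set.Icc (0:ℝ) (dist x y), ∀ t ∈ Set.Icc (0:ℝ) (dist y z),
        dist (γ1 s) (γ2 t) ≤ dist (cmpPt x' y' (dist x y) s) (cmpPt y' z' (dist y z) t)) ∧
      (∀ s ∈ Set.Icc (0:ℝ) (dist y z), ∀ t ∈ Set.Icc (0:ℝ) (dist z x),
        dist (γ2 s) (γ3 t) ≤ dist (cmpPt y' z' (dist y z) s) (cmpPt z' x' (dist z x) t)) ∧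
      (∀ s ∈ Set.Icc (0:ℝ) (dist z x), ∀ t ∈ Set.Icc (0:ℝ) (dist x y),
        dist (γ3 s) (γ1 t) ≤ dist (cmpPt z' x' (dist z x) s) (cmpPt x' y' (dist x y) t))

/-- Busemann convexity. -/
def BusemannConvex (X : Type*) [MetricSpace X] : Prop :=
  GeodesicSpace X ∧
  ∀ (a b c d : ℝ) (γ σ : ℝ → X), a ≤ b → c ≤ d →
    IsGeodesicOn γ a b → IsGeodesicOn σ c d →
    ∀ t ∈ Set.Icc (0:ℝ) 1,
      dist (γ ((1-t)*a + t*b)) (σ ((1-t)*c + t*d)) ≤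
        (1-t) * dist (γ a) (σ c) + t * dist (γ b) (σ d)

/-- A `(lam, eps)`-quasi-geodesic defined on `[a, b]`. -/
def IsQuasiGeodesicOn (lam eps : ℝ) (γ : ℝ → X) (a b : ℝ) : Prop :=
  ∀ s ∈ Set.Icc a b, ∀ t ∈ Set.Icc a b,
    (1/lam) * |s - t| - eps ≤ dist (γ s) (γ t) ∧ dist (γ s) (γ t) ≤ lam * |s - t| + eps

/-- A `(lam, eps)`-quasi-geodesic ray. -/
def IsQuasiGeodesicRay (lam eps : ℝ) (γ : ℝ → X) : Prop :=
  ∀ s ∈ Set.Ici (0:ℝ), ∀ t ∈ Set.Ici (0:ℝ),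
    (1/lam) * |s - t| - eps ≤ dist (γ s) (γ t) ∧ dist (γ s) (γ t) ≤ lam * |s - t| + eps

/-- A `k`-local `lam`-quasi-geodesic ray: a `(lam, eps)`-quasi-geodesic ray locally,
for every `eps > 0`. -/
def IsLocalQuasiGeodesicRay (k lam : ℝ) (γ : ℝ → X) : Prop :=
  ∀ eps > (0:ℝ), ∀ s ∈ Set.Ici (0:ℝ), ∀ t ∈ Set.Ici (0:ℝ), |s - t| ≤ k →
    (1/lam) * |s - t| - eps ≤ dist (γ s) (γ t) ∧ dist (γ s) (γ t) ≤ lam * |s - t| + eps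

/-- `S` is the image of a `lam`-quasi-geodesic joining `x` and `y`
(i.e. a `(lam, eps)`-quasi-geodesic for every `eps > 0`). -/
def IsQuasiGeodesicSegment (lam : ℝ) (S : Set X) (x y : X) : Prop :=
  ∃ (a b : ℝ) (γ : ℝ → X), a ≤ b ∧ (∀ eps > (0:ℝ), IsQuasiGeodesicOn lam eps γ a b) ∧
    γ a = x ∧ γ b = y ∧ S = γ '' Set.Icc a b

/-- Every `lam`-quasi-geodesic triangle in `X` is `M`-slim. -/
def QuasiGeodesicTrianglesSlim (X : Type*) [MetricSpace X] (lam M : ℝ) : Prop :=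
  ∀ x y z : X, ∀ S1 S2 S3 : Set X,
    IsQuasiGeodesicSegment lam S1 x y → IsQuasiGeodesicSegment lam S2 y z →
    IsQuasiGeodesicSegment lam S3 z x → SlimTriangle S1 S2 S3 M

/-- A play of the Lion-Man game in `A` with speed `D`. -/
def IsLionManPlay (A : Set X) (D : ℝ) (L M : ℕ → X) : Prop :=
  (∀ n, L n ∈ A) ∧ (∀ n, M n ∈ A) ∧
  (∀ n, ∃ S : Set X, IsGeodesicSegment S (L n) (M n) ∧ L (n+1) ∈ S) ∧
  (∀ n, dist (L n) (L (n+1)) = min D (dist (L n) (M n))) ∧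
  (∀ n, dist (M n) (M (n+1)) ≤ D)

/-- The lion wins a play if `d(L_{n+1}, M_n) → 0`. -/
def LionWins (L M : ℕ → X) : Prop :=
  Filter.Tendsto (fun n => dist (L (n+1)) (M n)) Filter.atTop (nhds 0)

/-- The lion always wins the Lion-Man game played in `A`. -/
def LionAlwaysWins (A : Set X) : Prop :=
  ∀ D > (0:ℝ), ∀ L M : ℕ → X, IsLionManPlay A D L M → LionWins L M

end Defs

/-- In any play of the Lion-Man game with speed `D > 0`: if `D_n > D` for all `n`, the
sequence `(D_n)` is nonincreasing; the lion wins iff exactly one of the following holds: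
(1) `D_{n₀} ≤ D` for some `n₀`, in which case `L_{n+1} = M_n` for all `n ≥ n₀`, or
(2) `D_n > D` for all `n` and `D_n → D`. Consequently, the man wins iff `D_n > D` for all
`n` and `lim D_n > D`. -/
theorem stmt11 {X : Type*} [MetricSpace X] (hX : UniquelyGeodesic X)
    (A : Set X) (hA : A.Nonempty) (hconv : GeodesicConvex A)
    (D : ℝ) (hD : 0 < D) (L M : ℕ → X) (hplay : IsLionManPlay A D L M) :
    ((∀ n, dist (L n) (M n) > D) → Antitone (fun n => dist (L n) (M n))) ∧
    (LionWins L M ↔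
      Xor' (∃ n₀ : ℕ, dist (L n₀) (M n₀) ≤ D ∧ ∀ n ≥ n₀, L (n + 1) = M n)
        ((∀ n, dist (L n) (M n) > D) ∧
          Filter.Tendsto (fun n => dist (L n) (M n)) Filter.atTop (nhds D))) ∧
    (¬ LionWins L M ↔
      (∀ n, dist (L n) (M n) > D) ∧
        ∃ c : ℝ, c > D ∧
          Filter.Tendsto (fun n => dist (L n) (M n)) Filter.atTop (nhds c)) := by

  obtain ⟨hLA, hMA, hseg, hlen, hM⟩ := hplay
  -- key splitting identity
  have key : ∀ n, dist (L (n+1)) (M n) = dist (L n) (M n) - min D (dist (L n) (M n)) := by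
    intro n
    obtain ⟨S, ⟨a, b, γ, hab, hgeo, ha, hb, hS⟩, hmem⟩ := hseg n
    rw [hS] at hmem
    obtain ⟨t, ht, hγt⟩ := hmem
    have h1 : dist (L n) (L (n+1)) = t - a := by
      rw [← ha, ← hγt, hgeo a ⟨le_refl a, hab⟩ t ht, abs_of_nonpos (by linarith [ht.1])]
      ring
    have h2 : dist (L (n+1)) (M n) = b - t := by
      rw [← hb, ← hγt, hgeo t ht b ⟨hab, le_refl b⟩, abs_of_nonpos (by linarith [ht.2])]
      ring
    have h3 : dist (L n) (M n) = b - a := by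
      rw [← ha, ← hb, hgeo a ⟨le_refl a, hab⟩ b ⟨hab, le_refl b⟩,
        abs_of_nonpos (by linarith)]
      ring
    have h4 := hlen n
    rw [h1] at h4
    rw [h2]
    linarith
  have hanti : (∀ n, dist (L n) (M n) > D) → Antitone (fun n => dist (L n) (M n)) := by
    intro h
    apply antitone_nat_of_succ_le
    intro n
    have h5 : dist (L (n+1)) (M (n+1)) ≤ dist (L (n+1)) (M n) + dist (M n) (M (n+1)) :=
      dist_triangle _ _ _
    have h6 := key n
    rw [min_eq_left (h n).le] at h6
    have := hM n
    show dist (L (n+1)) (M (n+1)) ≤ dist (L n) (M n)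
    linarith
  refine ⟨hanti, ?_⟩
  by_cases h : ∀ n, dist (L n) (M n) > D
  · -- case: distances always exceed D
    have hA2 : Antitone (fun n => dist (L n) (M n)) := hanti h
    have hbdd : BddBelow (Set.range (fun n => dist (L n) (M n))) :=
      ⟨D, by rintro x ⟨n, rfl⟩; exact (h n).le⟩
    have htend : Filter.Tendsto (fun n => dist (L n) (M n)) Filter.atTop
        (nhds (⨅ n, dist (L n) (M n))) := tendsto_atTop_ciInf hA2 hbdd
    set c := ⨅ n, dist (L n) (M n) with hc
    have hcD : D ≤ c := le_ciInf fun n => (h n).le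
    have hkey' : ∀ n, dist (L (n+1)) (M n) = dist (L n) (M n) - D := fun n => by
      rw [key n, min_eq_left (h n).le]
    have htend2 : Filter.Tendsto (fun n => dist (L (n+1)) (M n)) Filter.atTop
        (nhds (c - D)) := (htend.sub_const D).congr fun n => (hkey' n).symm
    have hwin_iff : LionWins L M ↔ c = D := by
      constructor
      · intro hw
        have := tendsto_nhds_unique htend2 hw
        linarith
      · intro hcd
        have : c - D = 0 := by rw [hcd]; ring
        rw [this] at htend2
        exact htend2
    have hnofirst : ¬ (∃ n₀ : ℕ, dist (L n₀) (M n₀) ≤ D ∧ ∀ n ≥ n₀, L (n + 1) = M n) := by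
      rintro ⟨n₀, hn₀, -⟩
      exact absurd hn₀ (not_le.mpr (h n₀))
    constructor
    · rw [hwin_iff]
      constructor
      · intro hcd
        refine Or.inr ⟨⟨h, by rw [← hcd]; exact htend⟩, hnofirst⟩
      · rintro (⟨h1, -⟩ | ⟨⟨-, h2⟩, -⟩)
        · exact absurd h1 hnofirst
        · exact tendsto_nhds_unique htend h2
    · constructor
      · intro hnw
        refine ⟨h, c, ?_, htend⟩
        rcases lt_or_eq_of_le hcD with h' | h'
        · exact h'
        · exact absurd (hwin_iff.mpr h'.symm) hnw
      · rintro ⟨-, c', hc', htend'⟩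
        rw [hwin_iff]
        have : c = c' := tendsto_nhds_unique htend htend'
        intro hcd
        rw [hcd] at this
        linarith
  · -- case: some distance is ≤ D
    push_neg at h
    obtain ⟨n₀, hn₀⟩ := h
    have hind : ∀ n, n₀ ≤ n → dist (L n) (M n) ≤ D ∧ L (n+1) = M n := by
      intro n hn
      induction n, hn using Nat.le_induction with
      | base =>
        refine ⟨hn₀, ?_⟩
        have h6 := key n₀
        rw [min_eq_right hn₀] at h6
        simp only [sub_self] at h6
        exact dist_eq_zero.mp h6
      | succ n hn ih =>
        have hle : dist (L (n+1)) (M (n+1)) ≤ D := by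
          rw [ih.2]; exact hM n
        refine ⟨hle, ?_⟩
        have h6 := key (n+1)
        rw [min_eq_right hle] at h6
        simp only [sub_self] at h6
        exact dist_eq_zero.mp h6
    have hwin : LionWins L M := by
      have hev : (fun n => dist (L (n+1)) (M n)) =ᶠ[Filter.atTop] (fun _ => (0:ℝ)) := by
        filter_upwards [Filter.eventually_ge_atTop n₀] with n hn
        rw [(hind n hn).2, dist_self]
      exact Filter.Tendsto.congr' hev.symm tendsto_const_nhds
    have hfirst : ∃ n₀ : ℕ, dist (L n₀) (M n₀) ≤ D ∧ ∀ n ≥ n₀, L (n + 1) = M n :=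
      ⟨n₀, hn₀, fun n hn => (hind n hn).2⟩
    have hnosecond : ¬ ((∀ n, dist (L n) (M n) > D) ∧
        Filter.Tendsto (fun n => dist (L n) (M n)) Filter.atTop (nhds D)) := by
      rintro ⟨h2, -⟩
      exact absurd hn₀ (not_le.mpr (h2 n₀))
    refine ⟨⟨fun _ => Or.inl ⟨hfirst, hnosecond⟩, fun _ => hwin⟩, ?_⟩
    constructor
    · intro hnw; exact absurd hwin hnw
    · rintro ⟨h2, -⟩
      exact absurd hn₀ (not_le.mpr (h2 n₀))
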